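/- arXiv:1408.5654 — 4 statements merged into one kernel-verified Lean document; each statement's English description precedes it below -/
import Mathlib

section
/- Let β > 0. For every δ > 0 there exist C > 0 and n₀ such that for all integers n ≥ n₀ and all real x with x ≥ (1+δ)√n: x² − k > 0 for each 1 ≤ k ≤ n, and | Σ_{k=1}^n 1/( (k+β−1/2)( x² − k + x√(x² − k) ) ) − log(x²)/(2x²) | ≤ C/n. -/
/-!
The denominator `g = x² - k + x√(x² - k)` satisfies `x² - k ≤ g ≤ 2x² ≤ g + 2k`, so replacing it by
`2x²` changes the `k`-th summand by `O(1 / ((x² - n) x²))`, i.e. the whole sum by `O(1/n)` once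
`x² ≥ (1 + δ)² n`. Replacing `k + β - 1/2` by `k` costs `O(1/k²)` per term, a bounded total.
What remains is `H_n / (2x²)`, and `H_n = log n + O(1)` while `0 ≤ log (x² / n) ≤ x² / n`.
-/

open Finset Real

lemma sum_Icc_inv_sq_le_two (n : ℕ) : ∑ k ∈ Icc 1 n, ((k : ℝ) ^ 2)⁻¹ ≤ 2 := by
  have h : Icc 1 n = Ioo 0 (n + 1) := by ext; simp only [mem_Icc, mem_Ioo]; omega
  simpa [h] using sum_Ioo_inv_sq_le (α := ℝ) 0 (n + 1)

lemma abs_sum_Icc_inv_sub_log_le_one (n : ℕ) : |∑ k ∈ Icc 1 n, (k : ℝ)⁻¹ - log n| ≤ 1 := by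
  have hH : ∑ k ∈ Icc 1 n, (k : ℝ)⁻¹ = harmonic n := by
    simp only [harmonic_eq_sum_Icc, Rat.cast_sum, Rat.cast_inv, Rat.cast_natCast]
  have hlog : log n ≤ log ↑(n + 1) := by
    rcases n.eq_zero_or_pos with rfl | hn
    · simp
    · exact log_le_log (by exact_mod_cast hn) (by push_cast; linarith)
  rw [hH, abs_le]
  constructor <;> linarith [harmonic_le_one_add_log n, log_add_one_le_harmonic n]

lemma abs_inv_add_sub_inv_le {k γ : ℝ} (hk : 1 ≤ k) (hγ : -1 / 2 ≤ γ) :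
    |(k + γ)⁻¹ - k⁻¹| ≤ 2 * |γ| * (k ^ 2)⁻¹ := by
  have hk0 : 0 < k := by linarith
  have ha : k / 2 ≤ k + γ := by linarith
  have ha0 : 0 < k + γ := by linarith
  rw [inv_sub_inv ha0.ne' hk0.ne', abs_div, abs_of_pos (mul_pos ha0 hk0), sub_add_cancel_left,
    abs_neg]
  calc |γ| / ((k + γ) * k) ≤ |γ| / (k / 2 * k) := by gcongr
    _ = 2 * |γ| * (k ^ 2)⁻¹ := by field_simp

lemma abs_sum_Icc_inv_add_sub_log_le (n : ℕ) {γ : ℝ} (hγ : -1 / 2 ≤ γ) :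
    |∑ k ∈ Icc 1 n, ((k : ℝ) + γ)⁻¹ - log n| ≤ 4 * |γ| + 1 := by
  have hshift : |∑ k ∈ Icc 1 n, ((k : ℝ) + γ)⁻¹ - ∑ k ∈ Icc 1 n, (k : ℝ)⁻¹| ≤ 4 * |γ| :=
    calc _ = |∑ k ∈ Icc 1 n, (((k : ℝ) + γ)⁻¹ - (k : ℝ)⁻¹)| := by rw [sum_sub_distrib]
      _ ≤ ∑ k ∈ Icc 1 n, 2 * |γ| * ((k : ℝ) ^ 2)⁻¹ :=
        abs_sum_le_sum_abs _ _ |>.trans <| sum_le_sum fun k hk =>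
          abs_inv_add_sub_inv_le (by exact_mod_cast (mem_Icc.mp hk).1) hγ
      _ = 2 * |γ| * ∑ k ∈ Icc 1 n, ((k : ℝ) ^ 2)⁻¹ := (mul_sum _ _ _).symm
      _ ≤ 2 * |γ| * 2 := by gcongr; exact sum_Icc_inv_sq_le_two n
      _ = 4 * |γ| := by ring
  calc _ ≤ _ := abs_sub_le _ (∑ k ∈ Icc 1 n, (k : ℝ)⁻¹) _
    _ ≤ 4 * |γ| + 1 := add_le_add hshift (abs_sum_Icc_inv_sub_log_le_one n)

lemma abs_inv_sq_sub_add_mul_sqrt_sub_inv_le {x k : ℝ} (hx : 0 ≤ x) (hk : 0 ≤ k)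
    (hkx : k < x ^ 2) :
    |(x ^ 2 - k + x * √(x ^ 2 - k))⁻¹ - (2 * x ^ 2)⁻¹| ≤ k / ((x ^ 2 - k) * x ^ 2) := by
  set g := x ^ 2 - k + x * √(x ^ 2 - k)
  have hsqrt : √(x ^ 2 - k) ≤ x := (sqrt_le_sqrt (by linarith)).trans_eq (sqrt_sq hx)
  have hsqrt_sq : x ^ 2 - k ≤ x * √(x ^ 2 - k) := by
    calc x ^ 2 - k = √(x ^ 2 - k) * √(x ^ 2 - k) := (mul_self_sqrt (by linarith)).symm
      _ ≤ x * √(x ^ 2 - k) := by gcongr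
  have hg_lower : x ^ 2 - k ≤ g := by simp only [g]; linarith [sqrt_nonneg (x ^ 2 - k)]
  have hg_gap : 2 * x ^ 2 - g ≤ 2 * k := by simp only [g]; linarith
  have hg_upper : g ≤ 2 * x ^ 2 := by
    have : x * √(x ^ 2 - k) ≤ x * x := by gcongr
    simp only [g]; nlinarith
  have hXk : 0 < x ^ 2 - k := by linarith
  have hX : 0 < x ^ 2 := by linarith
  have hg : 0 < g := hXk.trans_le hg_lower
  rw [inv_sub_inv hg.ne' (by positivity), abs_of_nonneg (div_nonneg (by linarith) (by positivity))]
  calc (2 * x ^ 2 - g) / (g * (2 * x ^ 2)) ≤ 2 * k / ((x ^ 2 - k) * (2 * x ^ 2)) := by gcongr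
    _ = k / ((x ^ 2 - k) * x ^ 2) := by field_simp

lemma abs_sum_inv_mul_sub_sum_inv_div_le {n : ℕ} {γ x : ℝ} (hγ : -1 / 2 ≤ γ) (hx : 0 ≤ x)
    (hnx : n < x ^ 2) :
    |∑ k ∈ Icc 1 n, 1 / (((k : ℝ) + γ) * (x ^ 2 - k + x * √(x ^ 2 - k)))
        - (∑ k ∈ Icc 1 n, ((k : ℝ) + γ)⁻¹) / (2 * x ^ 2)|
      ≤ n * (2 / ((x ^ 2 - n) * x ^ 2)) := by
  have hX : 0 < x ^ 2 := lt_of_le_of_lt (Nat.cast_nonneg n) hnx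
  have hXn : 0 < x ^ 2 - n := by linarith
  have hterm : ∀ k ∈ Icc 1 n, |1 / (((k : ℝ) + γ) * (x ^ 2 - k + x * √(x ^ 2 - k)))
      - ((k : ℝ) + γ)⁻¹ / (2 * x ^ 2)| ≤ 2 / ((x ^ 2 - n) * x ^ 2) := by
    intro k hk
    have hk1 : (1 : ℝ) ≤ k := by exact_mod_cast (mem_Icc.mp hk).1
    have hkn : (k : ℝ) ≤ n := by exact_mod_cast (mem_Icc.mp hk).2
    have ha : (k : ℝ) / 2 ≤ k + γ := by linarith
    have hainv : ((k : ℝ) + γ)⁻¹ ≤ 2 / k := by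
      rw [← inv_div]; exact inv_anti₀ (by positivity) ha
    rw [one_div, mul_inv, div_eq_mul_inv, ← mul_sub, abs_mul,
      abs_of_pos (inv_pos.mpr (by linarith))]
    calc ((k : ℝ) + γ)⁻¹ * |(x ^ 2 - k + x * √(x ^ 2 - k))⁻¹ - (2 * x ^ 2)⁻¹|
        ≤ 2 / k * (k / ((x ^ 2 - k) * x ^ 2)) := by
          gcongr
          exact abs_inv_sq_sub_add_mul_sqrt_sub_inv_le hx (by linarith) (by linarith)
      _ = 2 / ((x ^ 2 - k) * x ^ 2) := by field_simp
      _ ≤ 2 / ((x ^ 2 - n) * x ^ 2) := by gcongr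
  rw [sum_div, ← sum_sub_distrib]
  refine (abs_sum_le_sum_abs _ _).trans ((sum_le_card_nsmul _ _ _ hterm).trans_eq ?_)
  simp

lemma abs_log_sub_log_le_div {a b : ℝ} (ha : 0 < a) (hab : a ≤ b) : |log a - log b| ≤ b / a := by
  have hb : 0 < b := ha.trans_le hab
  rw [abs_sub_comm, abs_of_nonneg (sub_nonneg.mpr (log_le_log ha hab)),
    ← log_div hb.ne' ha.ne']
  exact log_le_self (by positivity)

theorem abs_sum_sub_log_sq_div_le {n : ℕ} (hn : 0 < n) {γ x : ℝ} (hγ : -1 / 2 ≤ γ) (hx : 0 ≤ x)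
    (hnx : n < x ^ 2) :
    |∑ k ∈ Icc 1 n, 1 / (((k : ℝ) + γ) * (x ^ 2 - k + x * √(x ^ 2 - k))) - log (x ^ 2) / (2 * x ^ 2)|
      ≤ n * (2 / ((x ^ 2 - n) * x ^ 2)) + (4 * |γ| + 1) / (2 * x ^ 2) + 1 / (2 * (n : ℝ)) := by
  have hn0 : (0 : ℝ) < n := by exact_mod_cast hn
  have hX : 0 < x ^ 2 := hn0.trans hnx
  set S := ∑ k ∈ Icc 1 n, 1 / (((k : ℝ) + γ) * (x ^ 2 - k + x * √(x ^ 2 - k)))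
  set A := ∑ k ∈ Icc 1 n, ((k : ℝ) + γ)⁻¹
  have hsplit : S - log (x ^ 2) / (2 * x ^ 2) = (S - A / (2 * x ^ 2))
      + (A - log n) / (2 * x ^ 2) + (log n - log (x ^ 2)) / (2 * x ^ 2) := by ring
  have hX2 : 0 < 2 * x ^ 2 := by positivity
  have hlog : |(log n - log (x ^ 2)) / (2 * x ^ 2)| ≤ 1 / (2 * (n : ℝ)) :=
    calc _ = |log n - log (x ^ 2)| / (2 * x ^ 2) := by rw [abs_div, abs_of_pos hX2]
      _ ≤ x ^ 2 / n / (2 * x ^ 2) := by gcongr; exact abs_log_sub_log_le_div hn0 hnx.le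
      _ = 1 / (2 * n) := by rw [div_div, div_eq_div_iff (by positivity) (by positivity)]; ring
  rw [hsplit]
  refine (abs_add_three _ _ _).trans (add_le_add (add_le_add
    (abs_sum_inv_mul_sub_sum_inv_div_le hγ hx hnx) ?_) hlog)
  rw [abs_div, abs_of_pos hX2]
  exact div_le_div_of_nonneg_right (abs_sum_Icc_inv_add_sub_log_le n hγ) hX2.le

/-- For `β > 0`: for every `δ > 0` there exist `C > 0` and `n₀` such that for all
`n ≥ n₀` and all real `x ≥ (1+δ)√n`: `x² − k > 0` for each `1 ≤ k ≤ n`, and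
`|Σ_{k=1}^n 1/((k+β−1/2)(x² − k + x√(x² − k))) − log(x²)/(2x²)| ≤ C/n`. -/
theorem stmt_11 (β : ℝ) (hβ : 0 < β) :
    ∀ δ : ℝ, 0 < δ → ∃ C > 0, ∃ n₀ : ℕ, ∀ n : ℕ, n₀ ≤ n →
      ∀ x : ℝ, (1 + δ) * Real.sqrt (n : ℝ) ≤ x →
        (∀ k : ℕ, 1 ≤ k → k ≤ n → 0 < x ^ 2 - (k : ℝ))
        ∧ |(∑ k ∈ Finset.Icc 1 n,
              1 / (((k : ℝ) + β - 1/2) * (x ^ 2 - (k : ℝ) + x * Real.sqrt (x ^ 2 - (k : ℝ)))))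
            - Real.log (x ^ 2) / (2 * x ^ 2)| ≤ C / (n : ℝ) := by
  intro δ hδ
  refine ⟨2 / δ + 2 * |β - 1 / 2| + 1, by positivity, 1, fun n hn x hx => ?_⟩
  have hn0 : (0 : ℝ) < n := by exact_mod_cast hn
  have hx0 : 0 ≤ x := le_trans (by positivity) hx
  have hX : (1 + δ) ^ 2 * n ≤ x ^ 2 := by
    simpa [mul_pow, sq_sqrt hn0.le] using pow_le_pow_left₀ (by positivity) hx 2
  have hgap : δ * n ≤ x ^ 2 - n := by nlinarith
  have hnX : (n : ℝ) < x ^ 2 := by nlinarith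
  refine ⟨fun k _ hk => by linarith [(Nat.cast_le (α := ℝ)).mpr hk], ?_⟩
  have hmain := abs_sum_sub_log_sq_div_le hn (γ := β - 1 / 2) (by linarith) hx0 hnX
  simp only [← add_sub_assoc] at hmain
  calc _ ≤ _ := hmain
    _ ≤ n * (2 / ((δ * n) * n)) + (4 * |β - 1 / 2| + 1) / (2 * n) + 1 / (2 * (n : ℝ)) := by
      gcongr
    _ = (2 / δ + 2 * |β - 1 / 2| + 1) / n := by field_simp; ring
end

section
/- Let 0 ≤ α < β, λ_n = (n+β+α−1)(n+β−α−1)/(2(n+β−1/2)), N = n+β−1. For every δ > 0 there exist C > 0 and n₀ such that for all n ≥ n₀, all 1 ≤ k ≤ n, and all real z ≥ 1+δ: | log( z + √(z² − 2λ_k/N) ) − log( z + √(z² − k/n) ) + (β − 3/2)/( 2n ( z² − k/n + z√(z² − k/n) ) ) − (α² − 1/4)/( 2n (k+β−1/2) ( z² − k/n + z√(z² − k/n) ) ) − ((β−1)/(2n)) ( z/√(z² − k/n) − 1 ) | ≤ C n^{−2}. -/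
/-!
Put `s = √(z² - k/n)` and `t = √(z² - 2λ_k/N)`. A direct computation gives `s² - t² = e/N`
with `e = lambdaDefect α β k (k/n)`, which is bounded uniformly in `1 ≤ k ≤ n`, while
`s² ≥ c := (1 + δ)² - 1`. Writing `(z + t)/(z + s) = 1 + u` with
`u = (t - s)/(z + s) = -(s² - t²)/((t + s)(z + s))`, the second-order expansions of
`log (1 + u)` and of `1/(t + s)` around `1/(2s)` give
`log (z + t) - log (z + s) = -(s² - t²)/(2s(z + s)) + O((s² - t²)²)`.
The three explicit correction terms add up to `e/(2n s(z + s))`, and this differs from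
`(s² - t²)/(2s(z + s)) = e/(2N s(z + s))` by `(β - 1) e/(2nN s(z + s)) = O(n⁻²)`.
-/

open Real

lemma abs_log_one_add_sub_self_le {x : ℝ} (hx : |x| ≤ 1 / 2) :
    |log (1 + x) - x| ≤ 2 * x ^ 2 := by
  have h := abs_log_sub_add_sum_range_le (x := -x) (by rw [abs_neg]; linarith) 1
  simp only [Finset.sum_range_one, zero_add, pow_one, Nat.cast_zero, div_one, sub_neg_eq_add,
    abs_neg] at h
  calc |log (1 + x) - x| = |-x + log (1 + x)| := by rw [neg_add_eq_sub]
    _ ≤ |x| ^ 2 / (1 - |x|) := h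
    _ ≤ 2 * x ^ 2 := by
      rw [div_le_iff₀ (by linarith), sq_abs]
      nlinarith [sq_nonneg x, abs_nonneg x]

lemma abs_log_add_sub_log_add_add_le {z s t σ : ℝ} (hz : 0 ≤ z) (hσ : 0 < σ) (hs : σ ≤ s)
    (ht : σ ≤ t) (hst : |s ^ 2 - t ^ 2| ≤ σ ^ 2) :
    |log (z + t) - log (z + s) + (s ^ 2 - t ^ 2) / (2 * s * (z + s))|
      ≤ (s ^ 2 - t ^ 2) ^ 2 / σ ^ 4 := by
  obtain ⟨d, hd⟩ : ∃ d, s ^ 2 - t ^ 2 = d := ⟨_, rfl⟩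
  rw [hd] at hst ⊢
  have hs0 : 0 < s := by linarith
  have hzs : 0 < z + s := by linarith
  have hts : 0 < t + s := by linarith
  have hden : 2 * σ ^ 2 ≤ (t + s) * (z + s) := by nlinarith
  obtain ⟨u, hu⟩ : ∃ u, u = -d / ((t + s) * (z + s)) := ⟨_, rfl⟩
  have hu_abs : |u| ≤ |d| / (2 * σ ^ 2) := by
    rw [hu, abs_div, abs_neg, abs_of_pos (mul_pos hts hzs)]
    exact div_le_div_of_nonneg_left (abs_nonneg d) (by positivity) hden
  have hu_half : |u| ≤ 1 / 2 :=
    hu_abs.trans ((div_le_iff₀ (by positivity)).2 (by linarith))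
  have hlog : log (z + t) - log (z + s) = log (1 + u) := by
    rw [← log_div (by linarith) hzs.ne', hu]
    congr 1
    field_simp
    linear_combination (-1 : ℝ) * hd
  have hrem : u + d / (2 * s * (z + s)) = -(d ^ 2 / (2 * s * (t + s) ^ 2 * (z + s))) := by
    rw [hu]
    field_simp
    linear_combination (-d) * hd
  have hrem_le : d ^ 2 / (2 * s * (t + s) ^ 2 * (z + s)) ≤ d ^ 2 / (8 * σ ^ 4) := by
    apply div_le_div_of_nonneg_left (sq_nonneg d) (by positivity)
    have : 2 * σ ≤ t + s := by linarith
    have : 4 * σ ^ 2 ≤ (t + s) ^ 2 := by nlinarith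
    have : σ ≤ z + s := by linarith
    calc 8 * σ ^ 4 = 2 * σ * (4 * σ ^ 2) * σ := by ring
      _ ≤ 2 * s * (t + s) ^ 2 * (z + s) := by gcongr
  have hu_sq : 2 * u ^ 2 ≤ d ^ 2 / (2 * σ ^ 4) := by
    have := pow_le_pow_left₀ (abs_nonneg u) hu_abs 2
    rw [sq_abs, div_pow, sq_abs] at this
    calc 2 * u ^ 2 ≤ 2 * (d ^ 2 / (2 * σ ^ 2) ^ 2) := by gcongr
      _ = d ^ 2 / (2 * σ ^ 4) := by ring
  calc |log (z + t) - log (z + s) + d / (2 * s * (z + s))|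
      = |(log (1 + u) - u) - d ^ 2 / (2 * s * (t + s) ^ 2 * (z + s))| := by
        rw [hlog, sub_eq_add_neg _ (d ^ 2 / _), ← hrem]; ring_nf
    _ ≤ |log (1 + u) - u| + d ^ 2 / (2 * s * (t + s) ^ 2 * (z + s)) := by
        refine (abs_sub _ _).trans_eq ?_
        rw [abs_of_nonneg (div_nonneg (sq_nonneg d) (by positivity))]
    _ ≤ d ^ 2 / (2 * σ ^ 4) + d ^ 2 / (8 * σ ^ 4) := by
        gcongr
        exact (abs_log_one_add_sub_self_le hu_half).trans hu_sq
    _ ≤ d ^ 2 / σ ^ 4 := by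
        field_simp
        nlinarith [sq_nonneg d]

lemma abs_log_add_sqrt_sub_log_add_sqrt_add_le {z b d c : ℝ} (hz : 0 ≤ z) (hc : 0 < c)
    (hb : c ≤ z ^ 2 - b) (hd : |d| ≤ c / 2) :
    |log (z + √(z ^ 2 - (b + d))) - log (z + √(z ^ 2 - b))
        + d / (2 * √(z ^ 2 - b) * (z + √(z ^ 2 - b)))| ≤ 4 * d ^ 2 / c ^ 2 := by
  have hσ : 0 < √(c / 2) := by positivity
  have hsq_b : √(z ^ 2 - b) ^ 2 = z ^ 2 - b := sq_sqrt (by linarith)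
  have hsq_bd : √(z ^ 2 - (b + d)) ^ 2 = z ^ 2 - (b + d) :=
    sq_sqrt (by linarith [(abs_le.1 hd).2])
  have hdiff : √(z ^ 2 - b) ^ 2 - √(z ^ 2 - (b + d)) ^ 2 = d := by
    rw [hsq_b, hsq_bd]; ring
  have h := abs_log_add_sub_log_add_add_le hz hσ
    (sqrt_le_sqrt (by linarith : c / 2 ≤ z ^ 2 - b))
    (sqrt_le_sqrt (by linarith [(abs_le.1 hd).2] : c / 2 ≤ z ^ 2 - (b + d)))
    (by rwa [hdiff, sq_sqrt (by positivity)])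
  rw [hdiff] at h
  refine h.trans_eq ?_
  rw [show √(c / 2) ^ 4 = (√(c / 2) ^ 2) ^ 2 by ring, sq_sqrt (by positivity)]
  field_simp
  ring

noncomputable def lambdaDefect (α β k b : ℝ) : ℝ :=
  (β - 3 / 2) - (α ^ 2 - 1 / 4) / (k + β - 1 / 2) - (β - 1) * b

lemma two_mul_lambda_div_eq {α β k n : ℝ} (hκ : k + β - 1 / 2 ≠ 0) (hn : n ≠ 0)
    (hN : n + β - 1 ≠ 0) :
    2 * ((k + β + α - 1) * (k + β - α - 1) / (2 * (k + β - 1 / 2))) / (n + β - 1)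
      = k / n + lambdaDefect α β k (k / n) / (n + β - 1) := by
  unfold lambdaDefect
  generalize hκ' : k + β - 1 / 2 = κ at *
  obtain rfl : k = κ - β + 1 / 2 := by linear_combination hκ'
  field_simp
  ring

lemma abs_lambdaDefect_le {α β k b : ℝ} (hβ : 0 < β) (hk : 1 ≤ k) (hb0 : 0 ≤ b)
    (hb1 : b ≤ 1) :
    |lambdaDefect α β k b| ≤ |β - 3 / 2| + |α ^ 2 - 1 / 4| / (β + 1 / 2) + |β - 1| := by
  have h₁ : |(α ^ 2 - 1 / 4) / (k + β - 1 / 2)| ≤ |α ^ 2 - 1 / 4| / (β + 1 / 2) := by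
    rw [abs_div, abs_of_pos (show 0 < k + β - 1 / 2 by linarith)]
    exact div_le_div_of_nonneg_left (abs_nonneg _) (by linarith) (by linarith)
  have h₂ : |(β - 1) * b| ≤ |β - 1| := by
    rw [abs_mul, abs_of_nonneg hb0]
    exact mul_le_of_le_one_right (abs_nonneg _) hb1
  calc _ ≤ |(β - 3 / 2) - (α ^ 2 - 1 / 4) / (k + β - 1 / 2)| + |(β - 1) * b| := abs_sub _ _
    _ ≤ |β - 3 / 2| + |(α ^ 2 - 1 / 4) / (k + β - 1 / 2)| + |(β - 1) * b| := by
        gcongr; exact abs_sub _ _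
    _ ≤ _ := by gcongr

lemma correction_terms_eq {α β k b n z s : ℝ} (hs : s ^ 2 = z ^ 2 - b) (hs0 : s ≠ 0)
    (hzs : z + s ≠ 0) (hn : n ≠ 0) (hN : n + β - 1 ≠ 0) :
    (β - 3 / 2) / (2 * n * (z ^ 2 - b + z * s))
        - (α ^ 2 - 1 / 4) / (2 * n * (k + β - 1 / 2) * (z ^ 2 - b + z * s))
        - (β - 1) / (2 * n) * (z / s - 1)
      = lambdaDefect α β k b / (n + β - 1)
          * (1 / (2 * s * (z + s)) + (β - 1) / (2 * n * s * (z + s))) := by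
  unfold lambdaDefect
  obtain rfl : b = z ^ 2 - s ^ 2 := by linear_combination hs
  rw [show z ^ 2 - (z ^ 2 - s ^ 2) + z * s = s * (z + s) by ring]
  field_simp
  ring

lemma abs_expansion_remainder_le {α β k n z c E : ℝ} (hn : 0 < n) (hN : n ≤ 2 * (n + β - 1))
    (hκ : k + β - 1 / 2 ≠ 0) (hz : 0 ≤ z) (hc : 0 < c) (hzc : c ≤ z ^ 2 - k / n)
    (hE : |lambdaDefect α β k (k / n)| ≤ E)
    (hEn : 4 * E ≤ c * n) :
    |log (z + √(z ^ 2 - 2 * ((k + β + α - 1) * (k + β - α - 1) / (2 * (k + β - 1 / 2)))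
          / (n + β - 1)))
        - log (z + √(z ^ 2 - k / n))
        + (β - 3 / 2) / (2 * n * (z ^ 2 - k / n + z * √(z ^ 2 - k / n)))
        - (α ^ 2 - 1 / 4) / (2 * n * (k + β - 1 / 2) * (z ^ 2 - k / n + z * √(z ^ 2 - k / n)))
        - (β - 1) / (2 * n) * (z / √(z ^ 2 - k / n) - 1)|
      ≤ (16 * E ^ 2 / c ^ 2 + |β - 1| * E / c) / n ^ 2 := by
  have hN0 : 0 < n + β - 1 := by linarith
  rw [two_mul_lambda_div_eq hκ hn.ne' hN0.ne']
  have hs0 : 0 < √(z ^ 2 - k / n) := sqrt_pos.2 (by linarith)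
  have hsq : √(z ^ 2 - k / n) ^ 2 = z ^ 2 - k / n := sq_sqrt (by linarith)
  have hc_le : c ≤ √(z ^ 2 - k / n) * (z + √(z ^ 2 - k / n)) := by nlinarith
  have hcorr :=
    correction_terms_eq (α := α) (k := k) hsq hs0.ne' (by positivity) hn.ne' hN0.ne'
  generalize lambdaDefect α β k (k / n) = e at hE hcorr ⊢
  have hE0 : 0 ≤ E := (abs_nonneg e).trans hE
  have hd : |e / (n + β - 1)| ≤ 2 * E / n := by
    rw [abs_div, abs_of_pos hN0, div_le_div_iff₀ hN0 hn]
    nlinarith [abs_nonneg e]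
  have hdc : |e / (n + β - 1)| ≤ c / 2 := hd.trans (by rw [div_le_iff₀ hn]; linarith)
  generalize e / (n + β - 1) = d at hd hdc hcorr ⊢
  have key := abs_log_add_sqrt_sub_log_add_sqrt_add_le hz hc hzc hdc
  set s := √(z ^ 2 - k / n)
  have hrest : |(β - 1) * d / (2 * n * (s * (z + s)))| ≤ |β - 1| * E / c / n ^ 2 := by
    rw [abs_div, abs_mul, abs_of_pos (show 0 < 2 * n * (s * (z + s)) by positivity)]
    calc |β - 1| * |d| / (2 * n * (s * (z + s))) ≤ |β - 1| * (2 * E / n) / (2 * n * c) := by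
          gcongr
      _ = |β - 1| * E / c / n ^ 2 := by field_simp
  calc _ = |(log (z + √(z ^ 2 - (k / n + d))) - log (z + s) + d / (2 * s * (z + s)))
          + (β - 1) * d / (2 * n * (s * (z + s)))| := by
        congr 1
        linear_combination hcorr
    _ ≤ 4 * d ^ 2 / c ^ 2 + |β - 1| * E / c / n ^ 2 :=
        (abs_add_le _ _).trans (add_le_add key hrest)
    _ ≤ 4 * (2 * E / n) ^ 2 / c ^ 2 + |β - 1| * E / c / n ^ 2 := by
        rw [← sq_abs d]; gcongr
    _ = _ := by field_simp; ring

/-- With `λ_n = (n+β+α−1)(n+β−α−1)/(2(n+β−1/2))` and `N = n+β−1`: for every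
`δ > 0` there exist `C > 0` and `n₀` such that for all `n ≥ n₀`, `1 ≤ k ≤ n`, `z ≥ 1+δ`:
`| log(z + √(z² − 2λ_k/N)) − log(z + √(z² − k/n))
   + (β−3/2)/(2n(z² − k/n + z√(z² − k/n)))
   − (α²−1/4)/(2n(k+β−1/2)(z² − k/n + z√(z² − k/n)))
   − ((β−1)/(2n))(z/√(z² − k/n) − 1) | ≤ C n^{−2}`. -/
theorem stmt_12 (α β : ℝ) (hα : 0 ≤ α) (hαβ : α < β)
    (lam : ℕ → ℝ)
    (hlam : ∀ n : ℕ, 1 ≤ n →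
      lam n = (((n : ℝ) + β + α - 1) * ((n : ℝ) + β - α - 1)) / (2 * ((n : ℝ) + β - 1/2))) :
    ∀ δ : ℝ, 0 < δ → ∃ C > 0, ∃ n₀ : ℕ, ∀ n : ℕ, n₀ ≤ n →
      ∀ k : ℕ, 1 ≤ k → k ≤ n → ∀ z : ℝ, 1 + δ ≤ z →
        |Real.log (z + Real.sqrt (z ^ 2 - 2 * lam k / ((n : ℝ) + β - 1)))
            - Real.log (z + Real.sqrt (z ^ 2 - (k : ℝ) / (n : ℝ)))
            + (β - 3/2) / (2 * (n : ℝ)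
                * (z ^ 2 - (k : ℝ) / (n : ℝ)
                  + z * Real.sqrt (z ^ 2 - (k : ℝ) / (n : ℝ))))
            - (α ^ 2 - 1/4) / (2 * (n : ℝ) * ((k : ℝ) + β - 1/2)
                * (z ^ 2 - (k : ℝ) / (n : ℝ)
                  + z * Real.sqrt (z ^ 2 - (k : ℝ) / (n : ℝ))))
            - (β - 1) / (2 * (n : ℝ))
                * (z / Real.sqrt (z ^ 2 - (k : ℝ) / (n : ℝ)) - 1)|
          ≤ C / (n : ℝ) ^ 2 := by
  have hβ : 0 < β := hα.trans_lt hαβ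
  intro δ hδ
  -- `c = (1 + δ)² - 1` bounds `z² - k / n` from below
  set c := δ * (2 + δ)
  set E := |β - 3 / 2| + |α ^ 2 - 1 / 4| / (β + 1 / 2) + |β - 1|
  have hc : 0 < c := by positivity
  refine ⟨16 * E ^ 2 / c ^ 2 + |β - 1| * E / c + 1, by positivity, max 2 ⌈4 * E / c⌉₊, ?_⟩
  intro n hn k hk hkn z hz
  have hn2 : (2 : ℝ) ≤ n := by exact_mod_cast (le_max_left _ _).trans hn
  have hEn : 4 * E / c ≤ n :=
    (Nat.le_ceil _).trans (by exact_mod_cast (le_max_right _ _).trans hn)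
  have hk1 : (1 : ℝ) ≤ k := by exact_mod_cast hk
  have hkn1 : (k : ℝ) / n ≤ 1 := (div_le_one (by linarith)).2 (by exact_mod_cast hkn)
  rw [hlam k hk]
  refine (abs_expansion_remainder_le (by linarith) (by linarith) (by linarith) (by linarith)
    hc ?_ (abs_lambdaDefect_le hβ hk1 (by positivity) hkn1) ?_).trans ?_
  · nlinarith
  · rw [div_le_iff₀ hc] at hEn; linarith
  · exact div_le_div_of_nonneg_right (by linarith) (by positivity)
end

section
/- For all real numbers δ > 0 and R > 1+δ there exist C > 0 and n₀ such that for all integers n ≥ n₀ and all real z ∈ [1+δ, R]: | Σ_{k=1}^n log( z + √(z² − k/n) ) − n( z² − 1/2 − z√(z² − 1) + log( z + √(z² − 1) ) ) − (1/2) log( ( z + √(z² − 1) )/(2z) ) | ≤ C/n. -/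
/-!
The sum is a right-endpoint Riemann sum of `f t = log (z + √(z² - t))` on `[0, 1]`, hence equals
`n` times the trapezoidal approximation of `∫₀¹ f` plus the boundary correction `(f 1 - f 0) / 2`.
The trapezoidal rule has error `O(sup |f''| / n²)`, and `|f''(t)| ≤ 1 / (2 (z² - t)²)` is bounded
uniformly for `z ≥ 1 + δ`. Finally `t log (z + √(z² - t)) + (z² - t) / 2 - z √(z² - t)` is an
antiderivative of `f`, which gives the main term, and `(f 1 - f 0) / 2` is the logarithmic one.
-/

open Finset Real

theorem abs_trapezoidal_error_le_of_hasDerivAt {f f' f'' : ℝ → ℝ} {a b ζ : ℝ} (hab : a < b)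
    (hf : ∀ x ∈ Set.Icc a b, HasDerivAt f (f' x) x)
    (hf' : ∀ x ∈ Set.Icc a b, HasDerivAt f' (f'' x) x)
    (hζ : ∀ x ∈ Set.Icc a b, |f'' x| ≤ ζ) {N : ℕ} (hN : 0 < N) :
    |trapezoidal_error f N a b| ≤ (b - a) ^ 3 * ζ / (12 * N ^ 2) := by
  have hderiv : Set.EqOn (derivWithin f (Set.Icc a b)) f' (Set.Icc a b) := fun x hx =>
    (hf x hx).hasDerivWithinAt.derivWithin (uniqueDiffOn_Icc hab x hx)
  have hdf : DifferentiableOn ℝ f (Set.Icc a b) := fun x hx =>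
    (hf x hx).differentiableAt.differentiableWithinAt
  have hddf : DifferentiableOn ℝ (derivWithin f (Set.Icc a b)) (Set.Icc a b) :=
    DifferentiableOn.congr (fun x hx => (hf' x hx).differentiableAt.differentiableWithinAt) hderiv
  -- `trapezoidal_error_le` wants the bound at every `x`; off `[a, b]` the derivative within is `0`.
  have hsecond (x : ℝ) : |iteratedDerivWithin 2 f (Set.Icc a b) x| ≤ ζ := by
    rw [iteratedDerivWithin_succ, iteratedDerivWithin_one]
    by_cases hx : x ∈ Set.Icc a b
    · rw [derivWithin_congr hderiv (hderiv hx),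
        (hf' x hx).hasDerivWithinAt.derivWithin (uniqueDiffOn_Icc hab x hx)]
      exact hζ x hx
    · rw [derivWithin_zero_of_notMem_closure (by rwa [closure_Icc]), abs_zero]
      exact (abs_nonneg _).trans (hζ a (Set.left_mem_Icc.2 hab.le))
  rw [← Set.uIcc_of_lt hab] at hdf hddf hsecond
  simpa only [abs_of_pos (sub_pos.2 hab)] using trapezoidal_error_le hdf hddf hsecond hN

theorem sum_Icc_div_eq_trapezoidal_integral (f : ℝ → ℝ) {N : ℕ} (hN : 0 < N) :
    ∑ k ∈ Icc 1 N, f (k / N) = N * trapezoidal_integral f N 0 1 + (f 1 - f 0) / 2 := by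
  obtain ⟨M, rfl⟩ := Nat.exists_eq_add_one_of_ne_zero hN.ne'
  have hM : ((M + 1 : ℕ) : ℝ) ≠ 0 := by positivity
  rw [trapezoidal_integral, ← Finset.Ico_add_one_right_eq_Icc, sum_Ico_eq_sum_range,
    Nat.add_sub_cancel, sum_range_succ, Nat.add_sub_cancel, add_comm 1 M, div_self hM]
  simp only [zero_add, sub_zero, mul_one, add_comm 1]
  field_simp
  push_cast
  ring

theorem abs_sum_Icc_div_sub_integral_le {f f' f'' : ℝ → ℝ} {ζ : ℝ}
    (hf : ∀ x ∈ Set.Icc (0 : ℝ) 1, HasDerivAt f (f' x) x)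
    (hf' : ∀ x ∈ Set.Icc (0 : ℝ) 1, HasDerivAt f' (f'' x) x)
    (hζ : ∀ x ∈ Set.Icc (0 : ℝ) 1, |f'' x| ≤ ζ) {N : ℕ} (hN : 0 < N) :
    |∑ k ∈ Icc 1 N, f (k / N) - N * (∫ t in (0 : ℝ)..1, f t) - (f 1 - f 0) / 2| ≤ ζ / (12 * N) := by
  have hN' : (0 : ℝ) < N := Nat.cast_pos.2 hN
  rw [sum_Icc_div_eq_trapezoidal_integral f hN]
  calc |N * trapezoidal_integral f N 0 1 + (f 1 - f 0) / 2 - N * (∫ t in (0 : ℝ)..1, f t)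
        - (f 1 - f 0) / 2|
      = N * |trapezoidal_error f N 0 1| := by
        rw [trapezoidal_error, ← abs_of_pos hN', ← abs_mul, abs_of_pos hN']
        ring_nf
    _ ≤ N * ((1 - 0) ^ 3 * ζ / (12 * N ^ 2)) :=
        mul_le_mul_of_nonneg_left (abs_trapezoidal_error_le_of_hasDerivAt zero_lt_one hf hf' hζ hN)
          hN'.le
    _ = ζ / (12 * N) := by simp only [sub_zero, one_pow, one_mul]; field_simp

section

variable {z t : ℝ}

theorem hasDerivAt_sqrt_sq_sub (ht : t < z ^ 2) :
    HasDerivAt (fun t => √(z ^ 2 - t)) (-1 / (2 * √(z ^ 2 - t))) t := by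
  simpa [neg_div] using ((hasDerivAt_id t).const_sub (z ^ 2)).sqrt (sub_ne_zero.2 ht.ne')

theorem hasDerivAt_log_add_sqrt (hz : 0 < z) (ht : t < z ^ 2) :
    HasDerivAt (fun t => log (z + √(z ^ 2 - t)))
      (-1 / (2 * √(z ^ 2 - t) * (z + √(z ^ 2 - t)))) t := by
  have hs : 0 < √(z ^ 2 - t) := sqrt_pos.2 (sub_pos.2 ht)
  convert ((hasDerivAt_sqrt_sq_sub ht).const_add z).log (by positivity) using 1
  field_simp

theorem hasDerivAt_deriv_log_add_sqrt (hz : 0 < z) (ht : t < z ^ 2) :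
    HasDerivAt (fun t => -1 / (2 * √(z ^ 2 - t) * (z + √(z ^ 2 - t))))
      (-(z + 2 * √(z ^ 2 - t)) / (4 * √(z ^ 2 - t) ^ 3 * (z + √(z ^ 2 - t)) ^ 2)) t := by
  have hs : 0 < √(z ^ 2 - t) := sqrt_pos.2 (sub_pos.2 ht)
  have hsqrt := hasDerivAt_sqrt_sq_sub ht
  refine ((hasDerivAt_const t (-1 : ℝ)).fun_div ((hsqrt.const_mul 2).fun_mul (hsqrt.const_add z))
    (by positivity)).congr_deriv ?_
  field_simp
  ring

theorem abs_second_deriv_log_add_sqrt_le (hz : 0 < z) (ht : t < z ^ 2) :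
    |-(z + 2 * √(z ^ 2 - t)) / (4 * √(z ^ 2 - t) ^ 3 * (z + √(z ^ 2 - t)) ^ 2)|
      ≤ 1 / (2 * (z ^ 2 - t) ^ 2) := by
  have hsq : z ^ 2 - t = √(z ^ 2 - t) ^ 2 := (sq_sqrt (sub_pos.2 ht).le).symm
  have hs : 0 < √(z ^ 2 - t) := sqrt_pos.2 (sub_pos.2 ht)
  set s := √(z ^ 2 - t)
  rw [hsq, abs_div, abs_neg, abs_of_pos (by positivity), abs_of_pos (by positivity),
    div_le_div_iff₀ (by positivity) (by positivity)]
  nlinarith [mul_pos hz hs, pow_pos hs 3, pow_pos hs 4, mul_pos (pow_pos hs 3) hz]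

theorem hasDerivAt_antideriv_log_add_sqrt (hz : 0 < z) (ht : t < z ^ 2) :
    HasDerivAt (fun t => t * log (z + √(z ^ 2 - t)) + (z ^ 2 - t) / 2 - z * √(z ^ 2 - t))
      (log (z + √(z ^ 2 - t))) t := by
  have hs : 0 < √(z ^ 2 - t) := sqrt_pos.2 (sub_pos.2 ht)
  have hsq : √(z ^ 2 - t) ^ 2 = z ^ 2 - t := sq_sqrt (sub_pos.2 ht).le
  refine ((((hasDerivAt_id' t).fun_mul (hasDerivAt_log_add_sqrt hz ht)).fun_add
    (((hasDerivAt_id' t).const_sub (z ^ 2)).div_const 2)).fun_sub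
    ((hasDerivAt_sqrt_sq_sub ht).const_mul z)).congr_deriv ?_
  field_simp
  linear_combination (-1) * hsq

theorem integral_log_add_sqrt (hz : 1 < z) :
    ∫ t in (0 : ℝ)..1, log (z + √(z ^ 2 - t))
      = z ^ 2 - 1 / 2 - z * √(z ^ 2 - 1) + log (z + √(z ^ 2 - 1)) := by
  have ht : ∀ t ∈ Set.uIcc (0 : ℝ) 1, t < z ^ 2 := fun t h => by
    rw [Set.uIcc_of_le zero_le_one] at h; nlinarith [h.2]
  rw [intervalIntegral.integral_eq_sub_of_hasDerivAt
    (fun t h => hasDerivAt_antideriv_log_add_sqrt (by linarith) (ht t h))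
    (ContinuousOn.intervalIntegrable fun t h =>
      (hasDerivAt_log_add_sqrt (by linarith) (ht t h)).continuousAt.continuousWithinAt)]
  simp only [sub_zero, sqrt_sq (by linarith : (0 : ℝ) ≤ z)]
  ring

end

theorem stmt_15_general (δ R : ℝ) (hδ : 0 < δ) :
    ∃ C > 0, ∃ n₀ : ℕ, ∀ n : ℕ, n₀ ≤ n →
      ∀ z : ℝ, 1 + δ ≤ z → z ≤ R →
        |(∑ k ∈ Finset.Icc 1 n, Real.log (z + Real.sqrt (z ^ 2 - (k : ℝ) / (n : ℝ))))
            - (n : ℝ) * (z ^ 2 - 1/2 - z * Real.sqrt (z ^ 2 - 1)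
                + Real.log (z + Real.sqrt (z ^ 2 - 1)))
            - (1/2) * Real.log ((z + Real.sqrt (z ^ 2 - 1)) / (2 * z))|
          ≤ C / (n : ℝ) := by
  refine ⟨1 / (96 * δ ^ 2), by positivity, 1, fun n hn z hz _ => ?_⟩
  have hz0 : 0 < z := by linarith
  have hgap (t : ℝ) (ht : t ∈ Set.Icc (0 : ℝ) 1) : 2 * δ ≤ z ^ 2 - t := by nlinarith [ht.2]
  have hlt (t : ℝ) (ht : t ∈ Set.Icc (0 : ℝ) 1) : t < z ^ 2 := by linarith [hgap t ht]
  have hf'' (t : ℝ) (ht : t ∈ Set.Icc (0 : ℝ) 1) :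
      |-(z + 2 * √(z ^ 2 - t)) / (4 * √(z ^ 2 - t) ^ 3 * (z + √(z ^ 2 - t)) ^ 2)|
        ≤ 1 / (8 * δ ^ 2) := by
    refine (abs_second_deriv_log_add_sqrt_le hz0 (hlt t ht)).trans ?_
    have := hgap t ht
    rw [div_le_div_iff_of_pos_left one_pos (by nlinarith) (by positivity)]
    nlinarith
  have key := abs_sum_Icc_div_sub_integral_le (fun t ht => hasDerivAt_log_add_sqrt hz0 (hlt t ht))
    (fun t ht => hasDerivAt_deriv_log_add_sqrt hz0 (hlt t ht)) hf'' hn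
  have hboundary : log (z + √(z ^ 2 - 1)) - log (z + √(z ^ 2 - 0))
      = log ((z + √(z ^ 2 - 1)) / (2 * z)) := by
    rw [sub_zero, sqrt_sq hz0.le, ← two_mul, log_div (by positivity) (by positivity)]
  rw [integral_log_add_sqrt (by linarith), hboundary] at key
  convert key using 1
  · rw [one_div_mul_eq_div]
  · field_simp
    ring

/-- For all `δ > 0` and `R > 1+δ` there exist `C > 0` and `n₀` such that for all
integers `n ≥ n₀` and all real `z ∈ [1+δ, R]`:
`| Σ_{k=1}^n log(z + √(z² − k/n)) − n(z² − 1/2 − z√(z² − 1) + log(z + √(z² − 1)))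
   − (1/2) log((z + √(z² − 1))/(2z)) | ≤ C/n`. -/
theorem stmt_15 (δ R : ℝ) (hδ : 0 < δ) (hR : 1 + δ < R) :
    ∃ C > 0, ∃ n₀ : ℕ, ∀ n : ℕ, n₀ ≤ n →
      ∀ z : ℝ, 1 + δ ≤ z → z ≤ R →
        |(∑ k ∈ Finset.Icc 1 n, Real.log (z + Real.sqrt (z ^ 2 - (k : ℝ) / (n : ℝ))))
            - (n : ℝ) * (z ^ 2 - 1/2 - z * Real.sqrt (z ^ 2 - 1)
                + Real.log (z + Real.sqrt (z ^ 2 - 1)))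
            - (1/2) * Real.log ((z + Real.sqrt (z ^ 2 - 1)) / (2 * z))|
          ≤ C / (n : ℝ) :=
  stmt_15_general δ R hδ
end

section
/- Define U : (−1, ∞) → ℝ by U(t) = ( (3/2)( t√(t²−1) − log(t + √(t²−1)) ) )^{2/3} for t ≥ 1 and U(t) = −( (3/2)( arccos t − t√(1−t²) ) )^{2/3} for −1 < t < 1. Then: (i) t√(t²−1) − log(t + √(t²−1)) ≥ 0 for all t ≥ 1 and arccos t − t√(1−t²) ≥ 0 for all −1 < t < 1, so U is well defined; (ii) U is continuous on (−1, ∞); (iii) U(t)/(t−1) → 2 as t → 1 (equivalently U(t) = 2(t−1) + O((t−1)²) as t → 1); and (iv) there exists δ > 0 such that U is strictly increasing on [1−δ, 1+δ]. -/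
/-!
Both segment areas vanish at `t = 1` and have derivatives `2√(t²-1)` and `-2√(1-t²)`. Hence they
are monotone, which gives (i) and, after taking `2/3`-powers, (iv). Writing
`√((1+u)²-1) = √u · √(2+u)` and `√(1-(1-u)²) = √u · √(2-u)`, L'Hôpital's rule against `u^{3/2}`
shows that `3/2` times either area is `2√2 · u^{3/2} + o(u^{3/2})` at distance `u` from `1`; since
`(2√2)^{2/3} = 2`, this is (iii). Continuity at `1` follows from (iii), as `U 1 = 0`.
-/

open Real Set Filter Topology

lemma hasDerivAt_rpow_three_halves {u : ℝ} (hu : 0 < u) :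
    HasDerivAt (fun u => u ^ (3 / 2 : ℝ)) (3 / 2 * √u) u := by
  convert hasDerivAt_rpow_const (p := 3 / 2) (Or.inl hu.ne') using 2
  rw [sqrt_eq_rpow]
  norm_num

lemma rpow_two_thirds_div {a u : ℝ} (ha : 0 ≤ a) (hu : 0 < u) :
    a ^ (2 / 3 : ℝ) / u = (a / u ^ (3 / 2 : ℝ)) ^ (2 / 3 : ℝ) := by
  rw [div_rpow ha (by positivity), ← rpow_mul hu.le]
  norm_num

lemma tendsto_rpow_two_thirds_div_of_hasDerivAt {F φ : ℝ → ℝ} {L : ℝ}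
    (hF : ∀ᶠ u in 𝓝[>] 0, HasDerivAt F (√u * φ u) u) (hF₀ : Tendsto F (𝓝[>] 0) (𝓝 0))
    (hF_nonneg : ∀ᶠ u in 𝓝[>] 0, 0 ≤ F u) (hφ : Tendsto φ (𝓝[>] 0) (𝓝 L)) :
    Tendsto (fun u => (3 / 2 * F u) ^ (2 / 3 : ℝ) / u) (𝓝[>] 0) (𝓝 (L ^ (2 / 3 : ℝ))) := by
  have hpos : ∀ᶠ u in 𝓝[>] (0 : ℝ), 0 < u := eventually_mem_nhdsWithin
  have hratio : Tendsto (fun u => 3 / 2 * F u / u ^ (3 / 2 : ℝ)) (𝓝[>] 0) (𝓝 L) := by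
    refine HasDerivAt.lhopital_zero_nhdsGT (hF.mono fun u hu => hu.const_mul (3 / 2))
      (hpos.mono fun u hu => hasDerivAt_rpow_three_halves hu)
      (hpos.mono fun u hu => by positivity) (by simpa using hF₀.const_mul (3 / 2)) ?_ ?_
    · have := (continuous_rpow_const (by norm_num : (0 : ℝ) ≤ 3 / 2)).tendsto (0 : ℝ)
      simpa using this.mono_left nhdsWithin_le_nhds
    · refine hφ.congr' (hpos.mono fun u hu => ?_)
      have : 0 < √u := sqrt_pos.2 hu
      field_simp
  refine ((continuousAt_rpow_const L _ (Or.inr (by norm_num))).tendsto.comp hratio).congr'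
    ((hpos.and hF_nonneg).mono fun u ⟨hu, hFu⟩ => ?_)
  exact (rpow_two_thirds_div (by positivity) hu).symm

lemma two_mul_sqrt_two_rpow_two_thirds : (2 * √2) ^ (2 / 3 : ℝ) = 2 := by
  have h : 2 * √2 = (2 : ℝ) ^ (3 / 2 : ℝ) := by
    rw [show (3 / 2 : ℝ) = 1 + 1 / 2 by norm_num, rpow_add two_pos, rpow_one, sqrt_eq_rpow]
  rw [h, ← rpow_mul zero_le_two]
  norm_num

/-- `hyperbolicSegmentArea t = ∫₁ᵗ 2√(s²-1) ds` is the area cut from the hyperbola `x² - y² = 1`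
by the chord `x = t`, and `circularSegmentArea t = ∫ₜ¹ 2√(1-s²) ds` the area cut from the unit disc
by the chord `x = t`. -/
noncomputable def hyperbolicSegmentArea (t : ℝ) : ℝ :=
  t * √(t ^ 2 - 1) - log (t + √(t ^ 2 - 1))

noncomputable def circularSegmentArea (t : ℝ) : ℝ :=
  arccos t - t * √(1 - t ^ 2)

lemma hyperbolicSegmentArea_one : hyperbolicSegmentArea 1 = 0 := by
  simp [hyperbolicSegmentArea]

lemma continuousOn_hyperbolicSegmentArea : ContinuousOn hyperbolicSegmentArea (Ioi 0) := by
  refine (continuous_id.mul (by fun_prop)).continuousOn.sub (ContinuousOn.log (by fun_prop) ?_)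
  intro t (ht : 0 < t)
  positivity

lemma hasDerivAt_hyperbolicSegmentArea {t : ℝ} (ht : 1 < t) :
    HasDerivAt hyperbolicSegmentArea (2 * √(t ^ 2 - 1)) t := by
  have hpos : 0 < t ^ 2 - 1 := by nlinarith
  have ht₀ : 0 < t := by linarith
  have hs : 0 < √(t ^ 2 - 1) := sqrt_pos.2 hpos
  have hsq : √(t ^ 2 - 1) ^ 2 = t ^ 2 - 1 := sq_sqrt hpos.le
  have hsqrt : HasDerivAt (fun t => √(t ^ 2 - 1)) (2 * t / (2 * √(t ^ 2 - 1))) t := by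
    simpa using ((hasDerivAt_pow 2 t).sub_const 1).sqrt hpos.ne'
  have hadd : HasDerivAt (fun t => t + √(t ^ 2 - 1)) (1 + 2 * t / (2 * √(t ^ 2 - 1))) t :=
    (hasDerivAt_id' t).add hsqrt
  have hlog := hadd.log (by positivity)
  refine (((hasDerivAt_id' t).mul hsqrt).sub hlog).congr_deriv ?_
  field_simp
  nlinarith [hsq]

lemma strictMonoOn_hyperbolicSegmentArea : StrictMonoOn hyperbolicSegmentArea (Ici 1) := by
  refine strictMonoOn_of_deriv_pos (convex_Ici 1)
    (continuousOn_hyperbolicSegmentArea.mono fun t (ht : 1 ≤ t) => by simp; linarith) ?_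
  rw [interior_Ici]
  intro t (ht : 1 < t)
  rw [(hasDerivAt_hyperbolicSegmentArea ht).deriv]
  have : 0 < t ^ 2 - 1 := by nlinarith
  positivity

lemma hyperbolicSegmentArea_nonneg {t : ℝ} (ht : 1 ≤ t) : 0 ≤ hyperbolicSegmentArea t :=
  hyperbolicSegmentArea_one ▸
    strictMonoOn_hyperbolicSegmentArea.monotoneOn self_mem_Ici ht ht

lemma circularSegmentArea_one : circularSegmentArea 1 = 0 := by
  simp [circularSegmentArea]

lemma continuous_circularSegmentArea : Continuous circularSegmentArea := by
  unfold circularSegmentArea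
  fun_prop

lemma hasDerivAt_circularSegmentArea {t : ℝ} (h₁ : -1 < t) (h₂ : t < 1) :
    HasDerivAt circularSegmentArea (-(2 * √(1 - t ^ 2))) t := by
  have hpos : 0 < 1 - t ^ 2 := by nlinarith
  have hs : 0 < √(1 - t ^ 2) := sqrt_pos.2 hpos
  have hsq : √(1 - t ^ 2) ^ 2 = 1 - t ^ 2 := sq_sqrt hpos.le
  have hsqrt : HasDerivAt (fun t => √(1 - t ^ 2)) (-(2 * t) / (2 * √(1 - t ^ 2))) t := by
    simpa using ((hasDerivAt_pow 2 t).const_sub 1).sqrt hpos.ne'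
  have := (hasDerivAt_arccos h₁.ne' h₂.ne).sub ((hasDerivAt_id' t).mul hsqrt)
  refine this.congr_deriv ?_
  field_simp
  nlinarith [hsq]

lemma strictAntiOn_circularSegmentArea : StrictAntiOn circularSegmentArea (Icc (-1) 1) := by
  refine strictAntiOn_of_deriv_neg (convex_Icc (-1) 1)
    continuous_circularSegmentArea.continuousOn ?_
  rw [interior_Icc]
  intro t ⟨h₁, h₂⟩
  rw [(hasDerivAt_circularSegmentArea h₁ h₂).deriv]
  have : 0 < 1 - t ^ 2 := by nlinarith
  simpa using this

lemma circularSegmentArea_nonneg {t : ℝ} (h₁ : -1 ≤ t) (h₂ : t ≤ 1) :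
    0 ≤ circularSegmentArea t :=
  circularSegmentArea_one ▸
    strictAntiOn_circularSegmentArea.antitoneOn ⟨h₁, h₂⟩ ⟨by norm_num, le_rfl⟩ h₂

noncomputable def hyperbolicBranch (t : ℝ) : ℝ :=
  (3 / 2 * hyperbolicSegmentArea t) ^ (2 / 3 : ℝ)

noncomputable def circularBranch (t : ℝ) : ℝ :=
  -(3 / 2 * circularSegmentArea t) ^ (2 / 3 : ℝ)

lemma tendsto_hyperbolicBranch_div :
    Tendsto (fun u => hyperbolicBranch (1 + u) / u) (𝓝[>] 0) (𝓝 2) := by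
  unfold hyperbolicBranch
  have hpos : ∀ᶠ u in 𝓝[>] (0 : ℝ), 0 < u := eventually_mem_nhdsWithin
  convert tendsto_rpow_two_thirds_div_of_hasDerivAt
    (F := fun u => hyperbolicSegmentArea (1 + u)) (φ := fun u => 2 * √(2 + u)) (L := 2 * √2)
    (hpos.mono fun u hu => ?_) ?_
    (hpos.mono fun u hu => hyperbolicSegmentArea_nonneg (by linarith)) ?_ using 2
  · exact two_mul_sqrt_two_rpow_two_thirds.symm
  · refine ((hasDerivAt_hyperbolicSegmentArea (by linarith)).comp_const_add 1 u).congr_deriv ?_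
    rw [mul_left_comm, ← sqrt_mul hu.le]
    ring_nf
  · have hcont : ContinuousAt (fun u => hyperbolicSegmentArea (1 + u)) 0 :=
      (continuousOn_hyperbolicSegmentArea.continuousAt (Ioi_mem_nhds (by norm_num))).comp
        (by fun_prop)
    simpa [hyperbolicSegmentArea_one] using hcont.tendsto.mono_left nhdsWithin_le_nhds
  · have : ContinuousAt (fun u : ℝ => 2 * √(2 + u)) 0 := by fun_prop
    simpa using this.tendsto.mono_left nhdsWithin_le_nhds

lemma tendsto_circularBranch_div :
    Tendsto (fun u => -circularBranch (1 - u) / u) (𝓝[>] 0) (𝓝 2) := by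
  simp only [circularBranch, neg_neg]
  have hmem : ∀ᶠ u in 𝓝[>] (0 : ℝ), u ∈ Ioo 0 2 := Ioo_mem_nhdsGT two_pos
  convert tendsto_rpow_two_thirds_div_of_hasDerivAt
    (F := fun u => circularSegmentArea (1 - u)) (φ := fun u => 2 * √(2 - u)) (L := 2 * √2)
    (hmem.mono fun u hu => ?_) ?_
    (hmem.mono fun u hu => circularSegmentArea_nonneg (by linarith [hu.2]) (by linarith [hu.1]))
    ?_ using 2
  · exact two_mul_sqrt_two_rpow_two_thirds.symm
  · refine ((hasDerivAt_circularSegmentArea (by linarith [hu.2]) (by linarith [hu.1])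
      ).comp_const_sub 1 u).congr_deriv ?_
    rw [neg_neg, mul_left_comm, ← sqrt_mul hu.1.le]
    ring_nf
  · have hcont : ContinuousAt (fun u => circularSegmentArea (1 - u)) 0 := by
      have := continuous_circularSegmentArea
      fun_prop
    simpa [circularSegmentArea_one] using hcont.tendsto.mono_left nhdsWithin_le_nhds
  · have : ContinuousAt (fun u : ℝ => 2 * √(2 - u)) 0 := by fun_prop
    simpa using this.tendsto.mono_left nhdsWithin_le_nhds

lemma continuousAt_hyperbolicBranch {x : ℝ} (hx : 0 < x) : ContinuousAt hyperbolicBranch x :=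
  ((continuousOn_hyperbolicSegmentArea.continuousAt (Ioi_mem_nhds hx)).const_mul _).rpow_const
    (Or.inr (by norm_num))

lemma continuous_circularBranch : Continuous circularBranch :=
  ((continuous_circularSegmentArea.const_mul _).rpow_const fun _ => Or.inr (by norm_num)).neg

lemma strictMonoOn_hyperbolicBranch : StrictMonoOn hyperbolicBranch (Ici 1) :=
  fun _ hx _ hy hxy => rpow_lt_rpow (by linarith [hyperbolicSegmentArea_nonneg hx])
    (by linarith [strictMonoOn_hyperbolicSegmentArea hx hy hxy]) (by norm_num)

lemma strictMonoOn_circularBranch : StrictMonoOn circularBranch (Icc (-1) 1) :=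
  fun _ hx _ hy hxy => neg_lt_neg <| rpow_lt_rpow
    (by linarith [circularSegmentArea_nonneg hy.1 hy.2])
    (by linarith [strictAntiOn_circularSegmentArea hx hy hxy]) (by norm_num)

section Glued

variable {U : ℝ → ℝ}

lemma tendsto_div_sub_one_of_eqOn_branches (hR : EqOn U hyperbolicBranch (Ici 1))
    (hL : EqOn U circularBranch (Ioc (-1) 1)) :
    Tendsto (fun t => U t / (t - 1)) (𝓝[≠] 1) (𝓝 2) := by
  rw [← nhdsLT_sup_nhdsGT]
  refine tendsto_sup.2 ⟨?_, ?_⟩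
  · have hmap : Tendsto (1 - ·) (𝓝[<] (1 : ℝ)) (𝓝[>] 0) := by
      rw [Tendsto, map_subLeft_nhdsLT, sub_self]
    refine (tendsto_circularBranch_div.comp hmap).congr' ?_
    filter_upwards [Ioo_mem_nhdsLT (by norm_num : (-1 : ℝ) < 1)] with t ⟨h₁, h₂⟩
    rw [Function.comp_apply, sub_sub_cancel, hL ⟨h₁, h₂.le⟩, neg_div, ← div_neg, neg_sub]
  · have hmap : Tendsto (· - 1) (𝓝[>] (1 : ℝ)) (𝓝[>] 0) := by
      rw [Tendsto, map_subRight_nhdsGT, sub_self]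
    refine (tendsto_hyperbolicBranch_div.comp hmap).congr' ?_
    filter_upwards [self_mem_nhdsWithin] with t (ht : 1 < t)
    rw [Function.comp_apply, add_sub_cancel, hR ht.le]

lemma continuousOn_of_eqOn_branches (hR : EqOn U hyperbolicBranch (Ici 1))
    (hL : EqOn U circularBranch (Ioc (-1) 1)) : ContinuousOn U (Ioi (-1)) := by
  intro x hx
  apply ContinuousAt.continuousWithinAt
  rcases lt_trichotomy x 1 with hx₁ | rfl | hx₁
  · exact continuous_circularBranch.continuousAt.congr
      (hL.eventuallyEq_of_mem (Ioc_mem_nhds hx hx₁)).symm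
  · have hU₁ : U 1 = 0 := by
      simp [hR self_mem_Ici, hyperbolicBranch, hyperbolicSegmentArea_one]
    refine (hasDerivAt_iff_tendsto_slope.2 <|
      (tendsto_div_sub_one_of_eqOn_branches hR hL).congr fun t => ?_).continuousAt
    rw [slope_def_field, hU₁, sub_zero]
  · exact (continuousAt_hyperbolicBranch (by linarith)).congr
      (hR.eventuallyEq_of_mem (Ici_mem_nhds hx₁)).symm

lemma strictMonoOn_of_eqOn_branches (hR : EqOn U hyperbolicBranch (Ici 1))
    (hL : EqOn U circularBranch (Ioc (-1) 1)) : StrictMonoOn U (Ioi (-1)) := by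
  rw [← Ioc_union_Ici_eq_Ioi (by norm_num : (-1 : ℝ) < 1)]
  refine StrictMonoOn.union ?_ ?_ ⟨right_mem_Ioc.2 (by norm_num), fun t ht => ht.2⟩ isLeast_Ici
  · exact hL.congr_strictMonoOn.2 <|
      strictMonoOn_circularBranch.mono fun t ht => ⟨ht.1.le, ht.2⟩
  · exact hR.congr_strictMonoOn.2 strictMonoOn_hyperbolicBranch

end Glued

/-- The function `U` on `(−1, ∞)` defined by
`U(t) = ((3/2)(t√(t²−1) − log(t+√(t²−1))))^{2/3}` for `t ≥ 1` and
`U(t) = −((3/2)(arccos t − t√(1−t²)))^{2/3}` for `−1 < t < 1` satisfies: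
(i) both inner quantities are nonnegative on the respective ranges;
(ii) `U` is continuous on `(−1, ∞)`;
(iii) `U(t)/(t−1) → 2` as `t → 1`;
(iv) `U` is strictly increasing on some interval `[1−δ, 1+δ]`. -/
theorem stmt_18 (U : ℝ → ℝ)
    (hU1 : ∀ t : ℝ, 1 ≤ t →
      U t = ((3/2) * (t * Real.sqrt (t ^ 2 - 1)
          - Real.log (t + Real.sqrt (t ^ 2 - 1)))) ^ ((2 : ℝ)/3))
    (hU2 : ∀ t : ℝ, -1 < t → t < 1 →
      U t = -(((3/2) * (Real.arccos t - t * Real.sqrt (1 - t ^ 2))) ^ ((2 : ℝ)/3))) :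
    (∀ t : ℝ, 1 ≤ t →
        0 ≤ t * Real.sqrt (t ^ 2 - 1) - Real.log (t + Real.sqrt (t ^ 2 - 1)))
      ∧ (∀ t : ℝ, -1 < t → t < 1 → 0 ≤ Real.arccos t - t * Real.sqrt (1 - t ^ 2))
      ∧ ContinuousOn U (Set.Ioi (-1 : ℝ))
      ∧ Tendsto (fun t : ℝ => U t / (t - 1)) (𝓝[≠] (1 : ℝ)) (𝓝 2)
      ∧ ∃ δ > (0 : ℝ), StrictMonoOn U (Set.Icc (1 - δ) (1 + δ)) := by
  have hR : EqOn U hyperbolicBranch (Ici 1) := fun t ht => hU1 t ht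
  have hL : EqOn U circularBranch (Ioc (-1) 1) := by
    rintro t ⟨h₁, h₂⟩
    rcases h₂.lt_or_eq with h₂ | rfl
    · exact hU2 t h₁ h₂
    · simp [hR self_mem_Ici, hyperbolicBranch, circularBranch, hyperbolicSegmentArea_one,
        circularSegmentArea_one]
  refine ⟨fun t ht => hyperbolicSegmentArea_nonneg ht,
    fun t h₁ h₂ => circularSegmentArea_nonneg h₁.le h₂.le, continuousOn_of_eqOn_branches hR hL,
    tendsto_div_sub_one_of_eqOn_branches hR hL, 1 / 2, by norm_num, ?_⟩
  exact (strictMonoOn_of_eqOn_branches hR hL).mono fun t ht => by simp at ht ⊢; linarith [ht.1]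
end
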